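/- Let H be a real Hilbert space, R ⊆ H with ‖r‖ ≤ 1 for all r ∈ R, ε ∈ (0,1], k ≥ 1, and x, z ∈ H with ‖x − z‖ < ε^{1/ε}. Then for every t ∈ [ε,2] and all pairwise orthogonal nonzero r₁,…,r_k ∈ R, with p = 2/(2−t) and ρ = ‖(‖r₁‖^t,…,‖r_k‖^t)‖_p, one has ∑_{i=1}^k |⟨r_i, x−z⟩|^t ≤ (1+ρ)‖x−z‖^ε < ε(1+ρ). -/

import Mathlib

/-!
Normalising the `rᵢ` gives an orthonormal family `sᵢ` with `⟪rᵢ, y⟫ = ‖rᵢ‖ ⟪sᵢ, y⟫`.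
Hölder's inequality with exponents `2/(2-t)` and `2/t` bounds `∑ ‖rᵢ‖^t |⟪sᵢ, y⟫|^t` by
`ρ (∑ ⟪sᵢ, y⟫²)^(t/2)`, and Bessel's inequality bounds this by `ρ ‖y‖^t`.
Since `‖y‖ < ε^(1/ε) ≤ 1` and `t ≥ ε`, we get `‖y‖^t ≤ ‖y‖^ε < ε`.
-/

open scoped RealInnerProductSpace

/-- The `L^p` norm of the vector `(‖r₁‖^t, …, ‖r_k‖^t)` with `p = 2/(2-t)`
(the `L^∞` norm, i.e. the maximum, when `t = 2`). -/
noncomputable def pNorm {H : Type*} [NormedAddCommGroup H] [InnerProductSpace ℝ H]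
    {k : ℕ} (t : ℝ) (r : Fin k → H) : ℝ :=
  if t < 2 then (∑ i, ‖r i‖ ^ (t * (2 / (2 - t)))) ^ ((2 - t) / 2)
  else ⨆ i, ‖r i‖ ^ t

theorem Real.sum_mul_abs_rpow_le_of_lt_two {ι : Type*} (s : Finset ι) {w : ι → ℝ} (a : ι → ℝ)
    (hw : ∀ i ∈ s, 0 ≤ w i) {t : ℝ} (ht0 : 0 < t) (ht2 : t < 2) :
    ∑ i ∈ s, w i * |a i| ^ t ≤
      (∑ i ∈ s, w i ^ (2 / (2 - t))) ^ ((2 - t) / 2) * (∑ i ∈ s, a i ^ 2) ^ (t / 2) := by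
  have hpq : Real.HolderConjugate (2 / (2 - t)) (2 / t) := by
    rw [Real.holderConjugate_iff]
    constructor
    · rw [lt_div_iff₀ (by linarith)]; linarith
    · field_simp; ring
  have hsq : ∀ i, (|a i| ^ t) ^ (2 / t) = a i ^ 2 := fun i => by
    rw [← Real.rpow_mul (abs_nonneg _), mul_div_cancel₀ _ ht0.ne', Real.rpow_two, sq_abs]
  have := Real.inner_le_Lp_mul_Lq_of_nonneg s (g := fun i => |a i| ^ t) hpq hw
    fun i _ => by positivity
  simpa only [hsq, one_div_div] using this

section

variable {H : Type*} [NormedAddCommGroup H] [InnerProductSpace ℝ H] {k : ℕ}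

lemma pNorm_nonneg (t : ℝ) (r : Fin k → H) : 0 ≤ pNorm t r := by
  unfold pNorm
  split
  · positivity
  · exact Real.iSup_nonneg fun i => by positivity

lemma pNorm_of_lt_two {t : ℝ} (ht : t < 2) (r : Fin k → H) :
    pNorm t r = (∑ i, (‖r i‖ ^ t) ^ (2 / (2 - t))) ^ ((2 - t) / 2) := by
  simp only [pNorm, if_pos ht, ← Real.rpow_mul (norm_nonneg _)]

lemma norm_rpow_two_le_pNorm_two (r : Fin k → H) (i : Fin k) : ‖r i‖ ^ (2 : ℝ) ≤ pNorm 2 r := by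
  rw [pNorm, if_neg (lt_irrefl 2)]
  exact le_ciSup (Set.finite_range fun i => ‖r i‖ ^ (2 : ℝ)).bddAbove i

lemma sum_norm_rpow_mul_abs_rpow_le_pNorm (r : Fin k → H) (c : Fin k → ℝ) {t : ℝ}
    (ht0 : 0 < t) (ht2 : t ≤ 2) :
    ∑ i, ‖r i‖ ^ t * |c i| ^ t ≤ pNorm t r * (∑ i, c i ^ 2) ^ (t / 2) := by
  rcases ht2.lt_or_eq with ht2 | rfl
  · rw [pNorm_of_lt_two ht2]
    exact Real.sum_mul_abs_rpow_le_of_lt_two _ c (fun i _ => by positivity) ht0 ht2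
  · rw [div_self two_ne_zero, Real.rpow_one, Finset.mul_sum]
    refine Finset.sum_le_sum fun i _ => ?_
    rw [Real.rpow_two |c i|, sq_abs]
    exact mul_le_mul_of_nonneg_right (norm_rpow_two_le_pNorm_two r i) (sq_nonneg _)

lemma orthonormal_inv_norm_smul {ι : Type*} {r : ι → H}
    (horth : Pairwise fun i j => ⟪r i, r j⟫ = 0) (hne : ∀ i, r i ≠ 0) :
    Orthonormal ℝ fun i => ‖r i‖⁻¹ • r i :=
  ⟨fun i => norm_smul_inv_norm (hne i), fun i j hij => by
    simp only [real_inner_smul_left, real_inner_smul_right, horth hij, mul_zero]⟩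

theorem sum_abs_inner_rpow_le_pNorm_mul {r : Fin k → H}
    (horth : Pairwise fun i j => ⟪r i, r j⟫ = 0) (hne : ∀ i, r i ≠ 0) {t : ℝ}
    (ht0 : 0 < t) (ht2 : t ≤ 2) (y : H) :
    ∑ i, |⟪r i, y⟫| ^ t ≤ pNorm t r * ‖y‖ ^ t := by
  set s := fun i => ‖r i‖⁻¹ • r i
  have hr : ∀ i, |⟪r i, y⟫| ^ t = ‖r i‖ ^ t * |⟪s i, y⟫| ^ t := fun i => by
    have hri : ⟪r i, y⟫ = ‖r i‖ * ⟪s i, y⟫ := by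
      rw [real_inner_smul_left, mul_inv_cancel_left₀ (norm_ne_zero_iff.2 (hne i))]
    rw [hri, abs_mul, abs_norm, Real.mul_rpow (norm_nonneg _) (abs_nonneg _)]
  have hbessel : ∑ i, ⟪s i, y⟫ ^ 2 ≤ ‖y‖ ^ 2 := by
    simpa only [Real.norm_eq_abs, sq_abs] using
      (orthonormal_inv_norm_smul horth hne).sum_inner_products_le (s := Finset.univ) y
  calc ∑ i, |⟪r i, y⟫| ^ t = ∑ i, ‖r i‖ ^ t * |⟪s i, y⟫| ^ t := by simp only [hr]
    _ ≤ pNorm t r * (∑ i, ⟪s i, y⟫ ^ 2) ^ (t / 2) :=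
      sum_norm_rpow_mul_abs_rpow_le_pNorm r _ ht0 ht2
    _ ≤ pNorm t r * (‖y‖ ^ 2) ^ (t / 2) := by gcongr; exact pNorm_nonneg t r
    _ = pNorm t r * ‖y‖ ^ t := by
      rw [← Real.rpow_natCast, ← Real.rpow_mul (norm_nonneg y), Nat.cast_ofNat,
        mul_div_cancel₀ _ two_ne_zero]

end

theorem stmt19_general {H : Type*} [NormedAddCommGroup H] [InnerProductSpace ℝ H]
    (ε : ℝ) (hε0 : 0 < ε) (hε1 : ε ≤ 1) (k : ℕ)
    (x z : H) (hxz : ‖x - z‖ < ε ^ (1 / ε))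
    (t : ℝ) (ht : t ∈ Set.Icc ε 2)
    (r : Fin k → H)
    (horth : ∀ i j, i ≠ j → ⟪r i, r j⟫ = 0) (hne : ∀ i, r i ≠ 0) :
    ∑ i, |⟪r i, x - z⟫| ^ t ≤ (1 + pNorm t r) * ‖x - z‖ ^ ε ∧
    (1 + pNorm t r) * ‖x - z‖ ^ ε < ε * (1 + pNorm t r) := by
  obtain ⟨htε, ht2⟩ := ht
  have hρ := pNorm_nonneg t r
  have hsmall : ‖x - z‖ ^ ε < ε :=
    (Real.lt_rpow_inv_iff_of_pos (norm_nonneg _) hε0.le hε0).1 (by rwa [← one_div])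
  have hle_one : ‖x - z‖ ≤ 1 := hxz.le.trans (Real.rpow_le_one hε0.le hε1 (by positivity))
  constructor
  · calc ∑ i, |⟪r i, x - z⟫| ^ t ≤ pNorm t r * ‖x - z‖ ^ t :=
          sum_abs_inner_rpow_le_pNorm_mul (fun i j => horth i j) hne (hε0.trans_le htε) ht2 _
      _ ≤ pNorm t r * ‖x - z‖ ^ ε := mul_le_mul_of_nonneg_left
          (Real.rpow_le_rpow_of_exponent_ge' (norm_nonneg _) hle_one hε0.le htε) hρ
      _ ≤ (1 + pNorm t r) * ‖x - z‖ ^ ε := by gcongr; linarith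
  · rw [mul_comm ε]
    gcongr

theorem stmt19 {H : Type*} [NormedAddCommGroup H] [InnerProductSpace ℝ H] [CompleteSpace H]
    (R : Set H) (hR : ∀ r ∈ R, ‖r‖ ≤ 1)
    (ε : ℝ) (hε0 : 0 < ε) (hε1 : ε ≤ 1) (k : ℕ) (hk : 1 ≤ k)
    (x z : H) (hxz : ‖x - z‖ < ε ^ (1 / ε))
    (t : ℝ) (ht : t ∈ Set.Icc ε 2)
    (r : Fin k → H) (hrR : ∀ i, r i ∈ R)
    (horth : ∀ i j, i ≠ j → ⟪r i, r j⟫ = 0) (hne : ∀ i, r i ≠ 0) :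
    ∑ i, |⟪r i, x - z⟫| ^ t ≤ (1 + pNorm t r) * ‖x - z‖ ^ ε ∧
    (1 + pNorm t r) * ‖x - z‖ ^ ε < ε * (1 + pNorm t r) :=
  stmt19_general ε hε0 hε1 k x z hxz t ht r horth hne
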